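/- arXiv:2008.09489 — 3 statements merged into one kernel-verified Lean document; each statement's English description precedes it below -/
import Mathlib

section
/- Let G be a group, N a normal subgroup of G, and let π₁, π₂ be irreducible finite-dimensional complex representations of G. If Hom_N(π₁, π₂) ≠ 0, then d_{π₂} · dim Hom_N(π₁, π₁) = d_{π₁} · dim Hom_N(π₁, π₂). -/
variable {G : Type*} [Group G]

/-- A finite-dimensional complex representation is irreducible if it is nonzero and has no
invariant subspace other than `⊥` and `⊤`. -/
def IsIrrep {V : Type*} [AddCommGroup V] [Module ℂ V] (ρ : Representation ℂ G V) : Prop :=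
  Nontrivial V ∧ ∀ p : Submodule ℂ V, (∀ g : G, ∀ v ∈ p, ρ g v ∈ p) → p = ⊥ ∨ p = ⊤

/-- The space of linear maps intertwining the restrictions to a subgroup `H`. -/
def homSpace (H : Subgroup G) {V₁ V₂ : Type*} [AddCommGroup V₁] [Module ℂ V₁]
    [AddCommGroup V₂] [Module ℂ V₂] (ρ₁ : Representation ℂ G V₁)
    (ρ₂ : Representation ℂ G V₂) : Submodule ℂ (V₁ →ₗ[ℂ] V₂) where
  carrier := {f | ∀ h ∈ H, ∀ v, f (ρ₁ h v) = ρ₂ h (f v)}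
  add_mem' := by
    intro f g hf hg h hh v
    simp [hf h hh v, hg h hh v]
  zero_mem' := by intro h hh v; simp
  smul_mem' := by
    intro c f hf h hh v
    simp [hf h hh v]

/-!
Let `S` be a minimal `N`-invariant subspace of `V₁`. Its translates `ρ₁ g S` are again minimal
(`N` is normal) and span `V₁` (`ρ₁` is irreducible), so a maximal independent family of them
gives `V₁ = ⊕ᵢ ρ₁ gᵢ S` (Clifford). A nonzero `N`-map `φ : V₁ → V₂` is injective on some
translate `S₁`, and `V₂` decomposes in the same way into translates of `φ S₁ ≅ S₁`.
For an `N`-invariant subspace `P` of a `G`-representation `ρ`, conjugation by `ρ₁ g` and `ρ g`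
identifies `Hom_N(V₁, ρ g P)` with `Hom_N(V₁, P)`; so with `r` and `s` summands and
`m = dim Hom_N(V₁, S₁)`:
`d₁ = r · dim S₁`, `dim Hom_N(V₁, V₁) = r · m`, `d₂ = s · dim S₁`, `dim Hom_N(V₁, V₂) = s · m`.
-/

open Module Representation

section LatticeDecomposition

variable {α ι : Type*}

theorem exists_finset_supIndep_sup_eq_top [CompleteLattice α] [IsModularLattice α]
    [WellFoundedGT α] {a : ι → α} (htop : ⨆ i, a i = ⊤)
    (hdich : ∀ (s : Finset ι) (i : ι), a i ≤ s.sup a ∨ Disjoint (a i) (s.sup a)) :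
    ∃ s : Finset ι, s.SupIndep a ∧ s.sup a = ⊤ := by
  classical
  obtain ⟨_, ⟨⟨s, hs, rfl⟩, hmax⟩⟩ := exists_maximal_of_wellFoundedGT
    (fun x => ∃ s : Finset ι, s.SupIndep a ∧ s.sup a = x) ⟨⊥, ∅, Finset.supIndep_empty a, rfl⟩
  refine ⟨s, hs, ?_⟩
  by_contra hne
  obtain ⟨i, hi⟩ : ∃ i, ¬ a i ≤ s.sup a := by
    by_contra! h
    exact hne (top_unique (htop ▸ iSup_le h))
  have hle := hmax ⟨insert i s, hs.insert ((hdich s i).resolve_left hi), rfl⟩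
    (Finset.sup_mono (Finset.subset_insert i s))
  exact hi ((Finset.le_sup (Finset.mem_insert_self i s)).trans hle)

theorem Sublattice.finsetSup_mem [Lattice α] [OrderBot α] (L : Sublattice α)
    (hbot : ⊥ ∈ L) {s : Finset ι} {f : ι → α} (hf : ∀ i ∈ s, f i ∈ L) : s.sup f ∈ L :=
  Finset.sup_induction hbot (fun _ ha _ hb => L.supClosed ha hb) hf

theorem Finset.SupIndep.apply_sup_eq_sum [Lattice α] [OrderBot α] {M : Type*}
    [AddCommMonoid M] {L : Sublattice α} (hbot : ⊥ ∈ L) {μ : α → M} (hμbot : μ ⊥ = 0)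
    (hμ : ∀ a ∈ L, ∀ b ∈ L, Disjoint a b → μ (a ⊔ b) = μ a + μ b)
    {s : Finset ι} {f : ι → α} (hs : s.SupIndep f) (hf : ∀ i ∈ s, f i ∈ L) :
    μ (s.sup f) = ∑ i ∈ s, μ (f i) := by
  classical
  induction s using Finset.induction_on with
  | empty => simpa using hμbot
  | insert i t hit ih =>
    have hsupL : t.sup f ∈ L :=
      L.finsetSup_mem hbot fun j hj => hf j (Finset.mem_insert_of_mem hj)
    rw [Finset.sup_insert, Finset.sum_insert hit,
      hμ _ (hf i (Finset.mem_insert_self i t)) _ hsupL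
        (hs (Finset.subset_insert i t) (Finset.mem_insert_self i t) hit),
      ih (hs.subset (Finset.subset_insert i t)) fun j hj => hf j (Finset.mem_insert_of_mem hj)]

end LatticeDecomposition

section MinimalInvariant

variable {k K W W' : Type*} [Field k] [Monoid K] [AddCommGroup W] [Module k W]
  [AddCommGroup W'] [Module k W']

abbrev IsMinimalInvariant (σ : Representation k K W) (S : Submodule k W) : Prop :=
  Minimal (fun P : Submodule k W => P ∈ σ.invtSubmodule ∧ P ≠ ⊥) S

theorem exists_isMinimalInvariant [FiniteDimensional k W] [Nontrivial W]
    (σ : Representation k K W) : ∃ S, IsMinimalInvariant σ S :=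
  exists_minimal_of_wellFoundedLT _ ⟨⊤, Representation.invtSubmodule.top_mem σ, top_ne_bot⟩

namespace IsMinimalInvariant

variable {σ : Representation k K W} {S : Submodule k W}

theorem le_or_disjoint (hS : IsMinimalInvariant σ S) {P : Submodule k W}
    (hP : P ∈ σ.invtSubmodule) : S ≤ P ∨ Disjoint S P := by
  by_cases h : S ⊓ P = ⊥
  · exact Or.inr (disjoint_iff.mpr h)
  · exact Or.inl (le_inf_iff.mp (hS.2 ⟨σ.invtSubmodule.inf_mem hS.1.1 hP, h⟩ inf_le_left)).2

theorem map (hS : IsMinimalInvariant σ S) {τ : Representation k K W'} (ψ : W →ₗ[k] W')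
    (hmap : S.map ψ ∈ τ.invtSubmodule)
    (hcomap : ∀ P ∈ τ.invtSubmodule, P.comap ψ ∈ σ.invtSubmodule) (hne : S.map ψ ≠ ⊥) :
    IsMinimalInvariant τ (S.map ψ) := by
  refine ⟨⟨hmap, hne⟩, fun P ⟨hP, hP0⟩ hPS => ?_⟩
  have hpull : (S ⊓ P.comap ψ).map ψ = P := by
    refine le_antisymm ((Submodule.map_mono inf_le_right).trans (Submodule.map_comap_le ψ P))
      fun x hx => ?_
    obtain ⟨s, hs, rfl⟩ := hPS hx
    exact Submodule.mem_map_of_mem ⟨hs, hx⟩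
  have hQ : S ⊓ P.comap ψ ≠ ⊥ := by
    rintro h
    exact hP0 (by rw [← hpull, h, Submodule.map_bot])
  rw [← hpull]
  exact Submodule.map_mono (hS.2 ⟨σ.invtSubmodule.inf_mem hS.1.1 (hcomap P hP), hQ⟩ inf_le_left)

end IsMinimalInvariant

end MinimalInvariant

section NormalSubgroup

variable {k V : Type*} [Field k] [AddCommGroup V] [Module k V] {N : Subgroup G}
  (ρ : Representation k G V)

theorem Representation.apply_conj_apply (g n : G) (v : V) :
    ρ g (ρ (g⁻¹ * n * g) v) = ρ n (ρ g v) := by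
  simp only [← Module.End.mul_apply, ← map_mul, mul_assoc, mul_inv_cancel_left]

theorem mem_invtSubmodule_comp_subtype {P : Submodule k V} :
    P ∈ invtSubmodule (ρ.comp N.subtype) ↔ ∀ n ∈ N, ∀ v ∈ P, ρ n v ∈ P := by
  simp [Representation.mem_invtSubmodule, Module.End.mem_invtSubmodule_iff_forall_mem_of_mem]

theorem map_mem_invtSubmodule_comp_subtype [N.Normal] (g : G) {P : Submodule k V}
    (hP : P ∈ invtSubmodule (ρ.comp N.subtype)) :
    P.map (ρ g) ∈ invtSubmodule (ρ.comp N.subtype) := by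
  rw [mem_invtSubmodule_comp_subtype] at hP ⊢
  rintro n hn _ ⟨v, hv, rfl⟩
  rw [← ρ.apply_conj_apply]
  exact Submodule.mem_map_of_mem (hP _ (Subgroup.Normal.conj_mem' inferInstance n hn g) v hv)

theorem Representation.comap_eq_map_inv (g : G) (P : Submodule k V) :
    P.comap (ρ g) = P.map (ρ g⁻¹) := by
  ext v
  rw [Submodule.mem_comap, Submodule.mem_map]
  exact ⟨fun hv => ⟨ρ g v, hv, ρ.inv_self_apply g v⟩, by rintro ⟨w, hw, rfl⟩; simpa using hw⟩

theorem IsMinimalInvariant.map_rep [N.Normal] {S : Submodule k V}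
    (hS : IsMinimalInvariant (ρ.comp N.subtype) S) (g : G) :
    IsMinimalInvariant (ρ.comp N.subtype) (S.map (ρ g)) :=
  hS.map (ρ g) (map_mem_invtSubmodule_comp_subtype ρ g hS.1.1)
    (fun P hP => ρ.comap_eq_map_inv g P ▸ map_mem_invtSubmodule_comp_subtype ρ g⁻¹ hP)
    fun h => hS.1.2 (Submodule.map_injective_of_injective (ρ.apply_bijective g).1
      (h.trans (Submodule.map_bot _).symm))

end NormalSubgroup

section Finrank

variable {k V V' : Type*} [Field k] [AddCommGroup V] [Module k V] [AddCommGroup V'] [Module k V']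

theorem ker_comp_subtype_eq_bot {φ : V →ₗ[k] V'} {S : Submodule k V}
    (h : Disjoint S (LinearMap.ker φ)) : LinearMap.ker (φ ∘ₗ S.subtype) = ⊥ := by
  rwa [LinearMap.ker_comp, ← Submodule.disjoint_iff_comap_eq_bot]

theorem finrank_map_of_disjoint_ker {φ : V →ₗ[k] V'} {S : Submodule k V}
    (h : Disjoint S (LinearMap.ker φ)) : finrank k (S.map φ) = finrank k S := by
  rw [← LinearMap.finrank_range_of_inj (LinearMap.ker_eq_bot.mp (ker_comp_subtype_eq_bot h)),
    LinearMap.range_comp, Submodule.range_subtype]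

theorem Finset.SupIndep.finrank_sup_eq_sum [FiniteDimensional k V] {ι : Type*} {s : Finset ι}
    {f : ι → Submodule k V} (hs : s.SupIndep f) :
    finrank k ↥(s.sup f) = ∑ i ∈ s, finrank k ↥(f i) :=
  hs.apply_sup_eq_sum (μ := fun P : Submodule k V => finrank k P) (L := ⊤) trivial
    (finrank_bot k V) (fun a _ b _ hab => by
      rw [← Submodule.finrank_sup_add_finrank_inf_eq, hab.eq_bot, finrank_bot, add_zero])
    fun _ _ => trivial

end Finrank

section HomSpaceInto

variable {V₀ V : Type*} [AddCommGroup V₀] [Module ℂ V₀] [AddCommGroup V] [Module ℂ V]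

/-- `Hom_H(ρ₀, P)` for an `H`-invariant subspace `P` of `V`, realised inside `Hom_H(ρ₀, ρ)` as the
intertwiners with image in `P`. -/
def homSpaceInto (H : Subgroup G) (ρ₀ : Representation ℂ G V₀) (ρ : Representation ℂ G V)
    (P : Submodule ℂ V) : Submodule ℂ (V₀ →ₗ[ℂ] V) :=
  homSpace H ρ₀ ρ ⊓ Submodule.compatibleMaps ⊤ P

variable {H : Subgroup G} {ρ₀ : Representation ℂ G V₀} {ρ : Representation ℂ G V}

theorem mem_homSpaceInto {P : Submodule ℂ V} {f : V₀ →ₗ[ℂ] V} :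
    f ∈ homSpaceInto H ρ₀ ρ P ↔ f ∈ homSpace H ρ₀ ρ ∧ ∀ v, f v ∈ P :=
  and_congr_right' ⟨fun hf v => hf (Submodule.mem_top (x := v)), fun hf v _ => hf v⟩

theorem homSpaceInto_top : homSpaceInto H ρ₀ ρ ⊤ = homSpace H ρ₀ ρ := by
  ext f
  simp [mem_homSpaceInto]

theorem homSpaceInto_bot : homSpaceInto H ρ₀ ρ ⊥ = ⊥ :=
  eq_bot_iff.mpr fun _ hf => (Submodule.mem_bot ℂ).mpr
    (LinearMap.ext fun v => (Submodule.mem_bot ℂ).mp ((mem_homSpaceInto.mp hf).2 v))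

theorem homSpaceInto_mono {P Q : Submodule ℂ V} (hPQ : P ≤ Q) :
    homSpaceInto H ρ₀ ρ P ≤ homSpaceInto H ρ₀ ρ Q := fun _ hf =>
  mem_homSpaceInto.mpr ⟨(mem_homSpaceInto.mp hf).1, fun v => hPQ ((mem_homSpaceInto.mp hf).2 v)⟩

theorem disjoint_homSpaceInto {A B : Submodule ℂ V} (hAB : Disjoint A B) :
    Disjoint (homSpaceInto H ρ₀ ρ A) (homSpaceInto H ρ₀ ρ B) := by
  rw [Submodule.disjoint_def]
  intro f hA hB
  ext v
  exact Submodule.disjoint_def.mp hAB _ ((mem_homSpaceInto.mp hA).2 v)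
    ((mem_homSpaceInto.mp hB).2 v)

theorem homSpaceInto_sup {A B : Submodule ℂ V} (hA : A ∈ invtSubmodule (ρ.comp H.subtype))
    (hB : B ∈ invtSubmodule (ρ.comp H.subtype)) (hAB : Disjoint A B) :
    homSpaceInto H ρ₀ ρ (A ⊔ B) = homSpaceInto H ρ₀ ρ A ⊔ homSpaceInto H ρ₀ ρ B := by
  refine le_antisymm (fun f hf => ?_) (sup_le (homSpaceInto_mono le_sup_left)
    (homSpaceInto_mono le_sup_right))
  obtain ⟨hfH, hfAB⟩ := mem_homSpaceInto.mp hf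
  rw [mem_invtSubmodule_comp_subtype] at hA hB
  obtain ⟨B', hBB', hcompl⟩ := hAB.symm.exists_isCompl
  -- `π` commutes with `ρ h` on `A ⊔ B` (though not on all of `V`), as `A` and `B` are invariant.
  set π := A.projection B' hcompl.symm
  have hπ : ∀ a ∈ A, ∀ b ∈ B, π (a + b) = a := fun a ha b hb => by
    rw [map_add, Submodule.projection_apply_of_mem_left _ ha,
      Submodule.projection_apply_of_mem_right _ (hBB' hb), add_zero]
  have hπf : ∀ v, π (f v) ∈ A ∧ f v - π (f v) ∈ B ∧
      ∀ h ∈ H, π (ρ h (f v)) = ρ h (π (f v)) := fun v => by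
    obtain ⟨a, ha, b, hb, hab⟩ := Submodule.mem_sup.mp (hfAB v)
    rw [← hab, hπ a ha b hb, add_sub_cancel_left]
    refine ⟨ha, hb, fun h hh => ?_⟩
    rw [map_add, hπ _ (hA h hh a ha) _ (hB h hh b hb)]
  have hfA : π ∘ₗ f ∈ homSpaceInto H ρ₀ ρ A := mem_homSpaceInto.mpr
    ⟨fun h hh v => by simp only [LinearMap.comp_apply, hfH h hh v, (hπf v).2.2 h hh],
      fun v => (hπf v).1⟩
  have hfB : f - π ∘ₗ f ∈ homSpaceInto H ρ₀ ρ B :=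
    mem_homSpaceInto.mpr ⟨sub_mem hfH (mem_homSpaceInto.mp hfA).1, fun v => (hπf v).2.1⟩
  simpa using Submodule.add_mem_sup hfA hfB

theorem finrank_homSpaceInto_sup [FiniteDimensional ℂ V₀] [FiniteDimensional ℂ V]
    {A B : Submodule ℂ V} (hA : A ∈ invtSubmodule (ρ.comp H.subtype))
    (hB : B ∈ invtSubmodule (ρ.comp H.subtype)) (hAB : Disjoint A B) :
    finrank ℂ (homSpaceInto H ρ₀ ρ (A ⊔ B)) =
      finrank ℂ (homSpaceInto H ρ₀ ρ A) + finrank ℂ (homSpaceInto H ρ₀ ρ B) := by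
  rw [← Submodule.finrank_sup_add_finrank_inf_eq, (disjoint_homSpaceInto hAB).eq_bot,
    finrank_bot, add_zero, homSpaceInto_sup hA hB hAB]

theorem finrank_homSpaceInto_finset_sup [FiniteDimensional ℂ V₀] [FiniteDimensional ℂ V]
    {ι : Type*} {s : Finset ι} {T : ι → Submodule ℂ V} (hs : s.SupIndep T)
    (hT : ∀ i ∈ s, T i ∈ invtSubmodule (ρ.comp H.subtype)) :
    finrank ℂ (homSpaceInto H ρ₀ ρ (s.sup T)) = ∑ i ∈ s, finrank ℂ (homSpaceInto H ρ₀ ρ (T i)) :=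
  hs.apply_sup_eq_sum (μ := fun P : Submodule ℂ V => finrank ℂ (homSpaceInto H ρ₀ ρ P))
    (invtSubmodule.bot_mem _) (by rw [homSpaceInto_bot, finrank_bot])
    (fun _ ha _ hb hab => finrank_homSpaceInto_sup ha hb hab) hT

end HomSpaceInto

section Twist

variable {V₀ V : Type*} [AddCommGroup V₀] [Module ℂ V₀] [AddCommGroup V] [Module ℂ V]
  {ρ₀ : Representation ℂ G V₀} {ρ : Representation ℂ G V}

theorem map_linHom_homSpaceInto_le {N : Subgroup G} [N.Normal] {P : Submodule ℂ V} (g : G) :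
    (homSpaceInto N ρ₀ ρ P).map (ρ₀.linHom ρ g) ≤ homSpaceInto N ρ₀ ρ (P.map (ρ g)) := by
  rintro _ ⟨f, hf, rfl⟩
  obtain ⟨hfN, hfP⟩ := mem_homSpaceInto.mp hf
  refine mem_homSpaceInto.mpr ⟨fun n hn v => ?_, fun v => ?_⟩
  · have hconj : ρ₀ g⁻¹ (ρ₀ n v) = ρ₀ (g⁻¹ * n * g) (ρ₀ g⁻¹ v) := by
      simp only [← Module.End.mul_apply, ← map_mul, mul_inv_cancel_right]
    simp only [Representation.linHom_apply, LinearMap.comp_apply]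
    rw [hconj, hfN _ (Subgroup.Normal.conj_mem' inferInstance n hn g), ρ.apply_conj_apply]
  · simp only [Representation.linHom_apply, LinearMap.comp_apply]
    exact Submodule.mem_map_of_mem (hfP _)

theorem finrank_homSpaceInto_map_rep [FiniteDimensional ℂ V₀] [FiniteDimensional ℂ V]
    {N : Subgroup G} [N.Normal] (P : Submodule ℂ V) (g : G) :
    finrank ℂ (homSpaceInto N ρ₀ ρ (P.map (ρ g))) = finrank ℂ (homSpaceInto N ρ₀ ρ P) := by
  have hle : ∀ (g : G) (P : Submodule ℂ V),
      finrank ℂ (homSpaceInto N ρ₀ ρ P) ≤ finrank ℂ (homSpaceInto N ρ₀ ρ (P.map (ρ g))) :=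
    fun g P => calc
      _ = finrank ℂ ((homSpaceInto N ρ₀ ρ P).map (ρ₀.linHom ρ g)) :=
        (Submodule.equivMapOfInjective _ ((ρ₀.linHom ρ).apply_bijective g).1 _).finrank_eq
      _ ≤ _ := Submodule.finrank_mono (map_linHom_homSpaceInto_le g)
  refine le_antisymm ?_ (hle g P)
  have hinv := hle g⁻¹ (P.map (ρ g))
  rwa [← ρ.comap_eq_map_inv, Submodule.comap_map_eq_of_injective (ρ.apply_bijective g).1]
    at hinv

end Twist

section TransportHom

variable {V₀ V V' : Type*} [AddCommGroup V₀] [Module ℂ V₀] [AddCommGroup V] [Module ℂ V]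
  [AddCommGroup V'] [Module ℂ V'] {H : Subgroup G} {ρ₀ : Representation ℂ G V₀}
  {ρ : Representation ℂ G V} {ρ' : Representation ℂ G V'}

theorem map_mem_invtSubmodule_of_mem_homSpace {φ : V →ₗ[ℂ] V'} (hφ : φ ∈ homSpace H ρ ρ')
    {P : Submodule ℂ V} (hP : P ∈ invtSubmodule (ρ.comp H.subtype)) :
    P.map φ ∈ invtSubmodule (ρ'.comp H.subtype) := by
  rw [mem_invtSubmodule_comp_subtype] at hP ⊢
  rintro h hh _ ⟨v, hv, rfl⟩
  exact ⟨ρ h v, hP h hh v hv, hφ h hh v⟩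

theorem comap_mem_invtSubmodule_of_mem_homSpace {φ : V →ₗ[ℂ] V'} (hφ : φ ∈ homSpace H ρ ρ')
    {P : Submodule ℂ V'} (hP : P ∈ invtSubmodule (ρ'.comp H.subtype)) :
    P.comap φ ∈ invtSubmodule (ρ.comp H.subtype) := by
  rw [mem_invtSubmodule_comp_subtype] at hP ⊢
  intro h hh v hv
  rw [Submodule.mem_comap, hφ h hh v]
  exact hP h hh _ hv

theorem finrank_homSpaceInto_map {φ : V →ₗ[ℂ] V'} (hφ : φ ∈ homSpace H ρ ρ')
    {S : Submodule ℂ V} (hS : S ∈ invtSubmodule (ρ.comp H.subtype))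
    (hdisj : Disjoint S (LinearMap.ker φ)) :
    finrank ℂ (homSpaceInto H ρ₀ ρ' (S.map φ)) = finrank ℂ (homSpaceInto H ρ₀ ρ S) := by
  rw [mem_invtSubmodule_comp_subtype] at hS
  obtain ⟨ψ, hψ⟩ := (φ ∘ₗ S.subtype).exists_leftInverse_of_injective (ker_comp_subtype_eq_bot hdisj)
  -- composing with `φ` and with the left inverse `ψ` of `φ|_S` are mutually inverse
  have hψφ : ∀ s ∈ S, (ψ (φ s) : V) = s := fun s hs =>
    congrArg Subtype.val (LinearMap.congr_fun hψ ⟨s, hs⟩)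
  have hto : ∀ f ∈ homSpaceInto H ρ₀ ρ S, φ ∘ₗ f ∈ homSpaceInto H ρ₀ ρ' (S.map φ) := by
    intro f hf
    obtain ⟨hfH, hfS⟩ := mem_homSpaceInto.mp hf
    refine mem_homSpaceInto.mpr ⟨fun h hh v => ?_, fun v => Submodule.mem_map_of_mem (hfS v)⟩
    simp only [LinearMap.comp_apply, hfH h hh v, hφ h hh]
  have hfrom : ∀ f ∈ homSpaceInto H ρ₀ ρ' (S.map φ),
      S.subtype ∘ₗ ψ ∘ₗ f ∈ homSpaceInto H ρ₀ ρ S := by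
    intro f hf
    obtain ⟨hfH, hfS⟩ := mem_homSpaceInto.mp hf
    refine mem_homSpaceInto.mpr ⟨fun h hh v => ?_, fun v => (ψ (f v)).2⟩
    obtain ⟨s, hs, hsv⟩ := hfS v
    simp only [LinearMap.comp_apply, Submodule.subtype_apply, hfH h hh v, ← hsv, ← hφ h hh,
      hψφ _ (hS h hh s hs), hψφ s hs]
  refine (LinearEquiv.ofLinearMap ((LinearMap.compRight ℂ φ).restrict hto)
    ((LinearMap.compRight ℂ (S.subtype ∘ₗ ψ)).restrict hfrom) ?_ ?_).finrank_eq.symm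
  · ext ⟨f, hf⟩ v
    obtain ⟨s, hs, hsv⟩ := (mem_homSpaceInto.mp hf).2 v
    change φ (ψ (f v)) = f v
    rw [← hsv, hψφ s hs]
  · ext ⟨f, hf⟩ v
    exact hψφ _ ((mem_homSpaceInto.mp hf).2 v)

end TransportHom

section Irreducible

variable {V₀ V : Type*} [AddCommGroup V₀] [Module ℂ V₀] [AddCommGroup V] [Module ℂ V]
  {ρ : Representation ℂ G V}

theorem IsIrrep.iSup_map_eq_top (hρ : IsIrrep ρ) {S : Submodule ℂ V} (hS : S ≠ ⊥) :
    ⨆ g, S.map (ρ g) = ⊤ := by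
  refine (hρ.2 _ fun g v hv => ?_).resolve_left fun h => hS (eq_bot_iff.mpr ?_)
  · have hle : (⨆ h, S.map (ρ h)).map (ρ g) ≤ ⨆ h, S.map (ρ h) := by
      rw [Submodule.map_iSup]
      refine iSup_le fun h => ?_
      rw [← Submodule.map_comp, ← Module.End.mul_eq_comp, ← map_mul]
      exact le_iSup (fun h => S.map (ρ h)) (g * h)
    exact hle (Submodule.mem_map_of_mem hv)
  · simpa [← h, Module.End.one_eq_id] using le_iSup (fun g => S.map (ρ g)) 1

theorem IsIrrep.exists_finset_supIndep_map [FiniteDimensional ℂ V] (hρ : IsIrrep ρ)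
    {N : Subgroup G} [N.Normal] {S : Submodule ℂ V}
    (hS : IsMinimalInvariant (ρ.comp N.subtype) S) :
    ∃ s : Finset G, s.SupIndep (fun g => S.map (ρ g)) ∧ s.sup (fun g => S.map (ρ g)) = ⊤ :=
  exists_finset_supIndep_sup_eq_top (hρ.iSup_map_eq_top hS.1.2) fun _ g =>
    (hS.map_rep ρ g).le_or_disjoint <| Sublattice.finsetSup_mem _ (invtSubmodule.bot_mem _)
      fun h _ => map_mem_invtSubmodule_comp_subtype ρ h hS.1.1

theorem IsIrrep.exists_finrank_eq_mul [FiniteDimensional ℂ V₀] [FiniteDimensional ℂ V]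
    (hρ : IsIrrep ρ) {N : Subgroup G} [N.Normal] {S : Submodule ℂ V}
    (hS : IsMinimalInvariant (ρ.comp N.subtype) S) (ρ₀ : Representation ℂ G V₀) :
    ∃ n : ℕ, finrank ℂ V = n * finrank ℂ S ∧
      finrank ℂ (homSpace N ρ₀ ρ) = n * finrank ℂ (homSpaceInto N ρ₀ ρ S) := by
  obtain ⟨s, hs, htop⟩ := hρ.exists_finset_supIndep_map hS
  refine ⟨s.card, ?_, ?_⟩
  · rw [← finrank_top ℂ V, ← htop, hs.finrank_sup_eq_sum, Finset.sum_congr rfl fun g _ =>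
      (Submodule.equivMapOfInjective _ (ρ.apply_bijective g).1 S).finrank_eq.symm,
      Finset.sum_const, smul_eq_mul]
  · rw [← homSpaceInto_top, ← htop, finrank_homSpaceInto_finset_sup hs
      fun g _ => map_mem_invtSubmodule_comp_subtype ρ g hS.1.1,
      Finset.sum_congr rfl fun g _ => finrank_homSpaceInto_map_rep S g, Finset.sum_const,
      smul_eq_mul]

end Irreducible

/-- if `Hom_N(π₁, π₂) ≠ 0` then
`d_{π₂} · dim Hom_N(π₁, π₁) = d_{π₁} · dim Hom_N(π₁, π₂)`. -/
theorem stmt1 {V₁ V₂ : Type*} [AddCommGroup V₁] [Module ℂ V₁] [FiniteDimensional ℂ V₁]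
    [AddCommGroup V₂] [Module ℂ V₂] [FiniteDimensional ℂ V₂]
    (N : Subgroup G) [N.Normal]
    (ρ₁ : Representation ℂ G V₁) (ρ₂ : Representation ℂ G V₂)
    (h₁ : IsIrrep ρ₁) (h₂ : IsIrrep ρ₂)
    (hne : homSpace N ρ₁ ρ₂ ≠ ⊥) :
    Module.finrank ℂ V₂ * Module.finrank ℂ (homSpace N ρ₁ ρ₁) =
      Module.finrank ℂ V₁ * Module.finrank ℂ (homSpace N ρ₁ ρ₂) := by
  obtain ⟨φ, hφ, hφ0⟩ := (Submodule.ne_bot_iff _).mp hne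
  have : Nontrivial V₁ := h₁.1
  obtain ⟨S, hS⟩ := exists_isMinimalInvariant (ρ₁.comp N.subtype)
  obtain ⟨g, hg⟩ : ∃ g, ¬ S.map (ρ₁ g) ≤ LinearMap.ker φ := by
    by_contra! h
    exact hφ0 (LinearMap.ker_eq_top.mp (top_unique (h₁.iSup_map_eq_top hS.1.2 ▸ iSup_le h)))
  set S₁ := S.map (ρ₁ g)
  have hS₁ : IsMinimalInvariant (ρ₁.comp N.subtype) S₁ := hS.map_rep ρ₁ g
  have hdisj : Disjoint S₁ (LinearMap.ker φ) := (hS₁.le_or_disjoint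
    (comap_mem_invtSubmodule_of_mem_homSpace hφ (invtSubmodule.bot_mem _))).resolve_left hg
  have hS₂ : IsMinimalInvariant (ρ₂.comp N.subtype) (S₁.map φ) :=
    hS₁.map φ (map_mem_invtSubmodule_of_mem_homSpace hφ hS₁.1.1)
      (fun _ hP => comap_mem_invtSubmodule_of_mem_homSpace hφ hP)
      fun h => hg (Submodule.map_le_iff_le_comap.mp h.le)
  obtain ⟨r, hd₁, hH₁⟩ := h₁.exists_finrank_eq_mul hS₁ ρ₁
  obtain ⟨s, hd₂, hH₂⟩ := h₂.exists_finrank_eq_mul hS₂ ρ₁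
  rw [hd₁, hd₂, hH₁, hH₂, finrank_map_of_disjoint_ker hdisj,
    finrank_homSpaceInto_map hφ hS₁.1.1 hdisj]
  ring
end

section
/- Let G be a group and (U_m)_{m≥0} a decreasing sequence of normal subgroups of G. For irreducible finite-dimensional complex representations π₁, π₂, π₃ of G, define dist(π_i, π_j) ∈ ℕ ∪ {∞} as the smallest m ≥ 0 such that Hom_{U_m}(π_i, π_j) ≠ 0 (and ∞ if no such m exists). Then dist(π₁, π₃) ≤ max(dist(π₁, π₂), dist(π₂, π₃)). -/
/-!
If `f : π₁ → π₂` and `g : π₂ → π₃` intertwine the action of a normal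
subgroup `H`, so do all the `G`-conjugates `π₃(x)⁻¹ ∘ g ∘ π₂(x)` of `g`, hence also their
composites with `f`. If all these composites vanished, the image of `f` would lie in the largest
`G`-invariant subspace of `ker g`, which is `0` by irreducibility of `π₂`. So
`Hom_H(π₁, π₂) ≠ 0` and `Hom_H(π₂, π₃) ≠ 0` force `Hom_H(π₁, π₃) ≠ 0`; apply this to
`H = U_m` with `m = max(dist(π₁, π₂), dist(π₂, π₃))`. -/

variable {G : Type*} [Group G]

/-- The distance `dist(π₁, π₂) ∈ ℕ ∪ {∞}`: the smallest `m ≥ 0` with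
`Hom_{U_m}(π₁, π₂) ≠ 0`, and `∞` if there is no such `m`. -/
noncomputable def distRep (U : ℕ → Subgroup G) {V₁ V₂ : Type*} [AddCommGroup V₁] [Module ℂ V₁]
    [AddCommGroup V₂] [Module ℂ V₂] (ρ₁ : Representation ℂ G V₁)
    (ρ₂ : Representation ℂ G V₂) : ℕ∞ :=
  sInf {x : ℕ∞ | ∃ m : ℕ, x = m ∧ homSpace (U m) ρ₁ ρ₂ ≠ ⊥}

section

variable {V₁ V₂ V₃ : Type*} [AddCommGroup V₁] [Module ℂ V₁] [AddCommGroup V₂] [Module ℂ V₂]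
  [AddCommGroup V₃] [Module ℂ V₃]
  {ρ₁ : Representation ℂ G V₁} {ρ₂ : Representation ℂ G V₂} {ρ₃ : Representation ℂ G V₃}

lemma homSpace_antitone : Antitone fun H : Subgroup G => homSpace H ρ₁ ρ₂ :=
  fun _ _ hle _ hf h hh v => hf h (hle hh) v

namespace homSpace

lemma comp_mem {H : Subgroup G} {f : V₁ →ₗ[ℂ] V₂} {g : V₂ →ₗ[ℂ] V₃}
    (hg : g ∈ homSpace H ρ₂ ρ₃) (hf : f ∈ homSpace H ρ₁ ρ₂) : g ∘ₗ f ∈ homSpace H ρ₁ ρ₃ :=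
  fun h hh v => by simp only [LinearMap.comp_apply, hf h hh v, hg h hh (f v)]

lemma conj_mem {H : Subgroup G} (hH : H.Normal) {g : V₂ →ₗ[ℂ] V₃}
    (hg : g ∈ homSpace H ρ₂ ρ₃) (x : G) : ρ₃ x⁻¹ ∘ₗ g ∘ₗ ρ₂ x ∈ homSpace H ρ₂ ρ₃ := by
  intro h hh v
  have hconj : ρ₂ x (ρ₂ h v) = ρ₂ (x * h * x⁻¹) (ρ₂ x v) := by
    simp only [← Module.End.mul_apply, ← map_mul, inv_mul_cancel_right]
  rw [LinearMap.comp_apply, LinearMap.comp_apply, hconj, hg _ (hH.conj_mem h hh x)]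
  simp only [LinearMap.comp_apply, ← Module.End.mul_apply, ← map_mul]
  group

end homSpace

lemma IsIrrep.iInf_ker_comp_eq_bot (hρ : IsIrrep ρ₂) {g : V₂ →ₗ[ℂ] V₃} (hg : g ≠ 0) :
    ⨅ x : G, LinearMap.ker (g ∘ₗ ρ₂ x) = ⊥ := by
  refine (hρ.2 _ fun y v hv => ?_).resolve_right fun htop => hg ?_
  · simp only [Submodule.mem_iInf, LinearMap.mem_ker, LinearMap.comp_apply] at hv ⊢
    intro x
    simpa [← Module.End.mul_apply, ← map_mul] using hv (x * y)
  · ext v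
    have hv : v ∈ ⨅ x : G, LinearMap.ker (g ∘ₗ ρ₂ x) := htop ▸ Submodule.mem_top
    simpa using Submodule.mem_iInf _ |>.mp hv 1

lemma IsIrrep.exists_comp_comp_ne_zero (hρ : IsIrrep ρ₂) {f : V₁ →ₗ[ℂ] V₂}
    {g : V₂ →ₗ[ℂ] V₃} (hf : f ≠ 0) (hg : g ≠ 0) : ∃ x : G, g ∘ₗ ρ₂ x ∘ₗ f ≠ 0 := by
  by_contra! hzero
  refine hf (LinearMap.range_eq_bot.mp (eq_bot_iff.mpr ?_))
  rw [← hρ.iInf_ker_comp_eq_bot hg]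
  rintro _ ⟨v, rfl⟩
  simpa [Submodule.mem_iInf] using fun x => LinearMap.congr_fun (hzero x) v

lemma homSpace_ne_bot_trans {H : Subgroup G} (hH : H.Normal) (hρ₂ : IsIrrep ρ₂)
    (h₁₂ : homSpace H ρ₁ ρ₂ ≠ ⊥) (h₂₃ : homSpace H ρ₂ ρ₃ ≠ ⊥) : homSpace H ρ₁ ρ₃ ≠ ⊥ := by
  obtain ⟨f, hf, hf0⟩ := (Submodule.ne_bot_iff _).mp h₁₂
  obtain ⟨g, hg, hg0⟩ := (Submodule.ne_bot_iff _).mp h₂₃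
  obtain ⟨x, hx⟩ := hρ₂.exists_comp_comp_ne_zero hf0 hg0
  refine (Submodule.ne_bot_iff _).mpr ⟨(ρ₃ x⁻¹ ∘ₗ g ∘ₗ ρ₂ x) ∘ₗ f,
    homSpace.comp_mem (homSpace.conj_mem hH hg x) hf, fun h => hx ?_⟩
  ext v
  simpa [← Module.End.mul_apply, ← map_mul] using congr_arg (ρ₃ x) (LinearMap.congr_fun h v)

lemma distRep_le_iff {U : ℕ → Subgroup G} (hU : Antitone U) (m : ℕ) :
    distRep U ρ₁ ρ₂ ≤ m ↔ homSpace (U m) ρ₁ ρ₂ ≠ ⊥ := by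
  refine ⟨fun hle => ?_, fun h => sInf_le ⟨m, rfl, h⟩⟩
  have hne : {x : ℕ∞ | ∃ k : ℕ, x = k ∧ homSpace (U k) ρ₁ ρ₂ ≠ ⊥}.Nonempty := by
    by_contra hempty
    simp [distRep, Set.not_nonempty_iff_eq_empty.mp hempty] at hle
  obtain ⟨k, hk, hne_bot⟩ := csInf_mem hne
  rw [distRep, hk, Nat.cast_le] at hle
  exact fun hbot => hne_bot (eq_bot_iff.mpr (hbot ▸ homSpace_antitone (hU hle)))

end

theorem stmt3_general {V₁ V₂ V₃ : Type*} [AddCommGroup V₁] [Module ℂ V₁]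
    [AddCommGroup V₂] [Module ℂ V₂]
    [AddCommGroup V₃] [Module ℂ V₃]
    (U : ℕ → Subgroup G) (hU : Antitone U) (hUnormal : ∀ m, (U m).Normal)
    (ρ₁ : Representation ℂ G V₁) (ρ₂ : Representation ℂ G V₂) (ρ₃ : Representation ℂ G V₃)
    (h₂ : IsIrrep ρ₂) :
    distRep U ρ₁ ρ₃ ≤ max (distRep U ρ₁ ρ₂) (distRep U ρ₂ ρ₃) := by
  refine le_of_forall_ge fun d hd => ?_
  induction d using ENat.recTopCoe with
  | top => exact le_top
  | coe m =>
    rw [max_le_iff, distRep_le_iff hU, distRep_le_iff hU] at hd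
    exact (distRep_le_iff hU m).mpr (homSpace_ne_bot_trans (hUnormal m) h₂ hd.1 hd.2)

/-- the ultrametric inequality for `dist`. -/
theorem stmt3 {V₁ V₂ V₃ : Type*} [AddCommGroup V₁] [Module ℂ V₁] [FiniteDimensional ℂ V₁]
    [AddCommGroup V₂] [Module ℂ V₂] [FiniteDimensional ℂ V₂]
    [AddCommGroup V₃] [Module ℂ V₃] [FiniteDimensional ℂ V₃]
    (U : ℕ → Subgroup G) (hU : Antitone U) (hUnormal : ∀ m, (U m).Normal)
    (ρ₁ : Representation ℂ G V₁) (ρ₂ : Representation ℂ G V₂) (ρ₃ : Representation ℂ G V₃)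
    (h₁ : IsIrrep ρ₁) (h₂ : IsIrrep ρ₂) (h₃ : IsIrrep ρ₃) :
    distRep U ρ₁ ρ₃ ≤ max (distRep U ρ₁ ρ₂) (distRep U ρ₂ ρ₃) :=
  stmt3_general U hU hUnormal ρ₁ ρ₂ ρ₃ h₂
end

section
/- Let G be a group, N a normal subgroup of G, and let π₁, π₂ be irreducible finite-dimensional complex representations of G. Then dim Hom_N(π₁, π₂) = dim Hom_N(π₂, π₁). -/
variable {G : Type*} [Group G]

/-!
By Clifford's theorem the restriction of an irreducible representation of `G` to a normal
subgroup `N` is semisimple: the `G`-translates of a simple `N`-subrepresentation are again simple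
`N`-subrepresentations, and their sum is `G`-stable, hence everything. For semisimple modules
`M ≅ ⨁ Sᵢ` and `M' ≅ ⨁ Tⱼ` one has `dim Hom(M, M') = ∑ᵢⱼ dim Hom(Sᵢ, Tⱼ)`, and by Schur's lemma
`Hom(Sᵢ, Tⱼ)` and `Hom(Tⱼ, Sᵢ)` are both zero unless `Sᵢ ≅ Tⱼ`, in which case both are
isomorphic to `End(Sᵢ)`; so the sum is symmetric.
-/

open Module
open scoped MonoidAlgebra

section FinrankLinearMap

variable {k A : Type*} [Field k] [Ring A] [Algebra k A]
variable {M M' N N' : Type*}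
  [AddCommGroup M] [Module k M] [Module A M] [IsScalarTower k A M]
  [AddCommGroup M'] [Module k M'] [Module A M'] [IsScalarTower k A M']
  [AddCommGroup N] [Module k N] [Module A N] [IsScalarTower k A N]
  [AddCommGroup N'] [Module k N'] [Module A N'] [IsScalarTower k A N']

variable (k) in
def LinearEquiv.linearMapCongr (e₁ : M ≃ₗ[A] M') (e₂ : N ≃ₗ[A] N') :
    (M →ₗ[A] N) ≃ₗ[k] (M' →ₗ[A] N') where
  toFun f := e₂.toLinearMap ∘ₗ f ∘ₗ e₁.symm.toLinearMap
  invFun f := e₂.symm.toLinearMap ∘ₗ f ∘ₗ e₁.toLinearMap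
  map_add' f g := by ext; simp
  map_smul' c f := by ext; exact e₂.toLinearMap.map_smul_of_tower c _
  left_inv f := by ext; simp
  right_inv f := by ext; simp

lemma IsSimpleModule.subsingleton_linearMap [IsSimpleModule A M] [IsSimpleModule A N]
    [IsEmpty (M ≃ₗ[A] N)] : Subsingleton (M →ₗ[A] N) where
  allEq f g := by
    have eq_zero (f : M →ₗ[A] N) : f = 0 := by
      by_contra hf
      exact isEmptyElim (LinearEquiv.ofBijective f (f.bijective_of_ne_zero hf))
    rw [eq_zero f, eq_zero g]

lemma finrank_linearMap_comm_of_isSimpleModule [IsSimpleModule A M] [IsSimpleModule A N] :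
    finrank k (M →ₗ[A] N) = finrank k (N →ₗ[A] M) := by
  rcases isEmpty_or_nonempty (M ≃ₗ[A] N) with h | ⟨⟨e⟩⟩
  · have : IsEmpty (N ≃ₗ[A] M) := ⟨fun e ↦ isEmptyElim e.symm⟩
    have := IsSimpleModule.subsingleton_linearMap (A := A) (M := M) (N := N)
    have := IsSimpleModule.subsingleton_linearMap (A := A) (M := N) (N := M)
    simp only [finrank_zero_of_subsingleton]
  · exact (LinearEquiv.linearMapCongr k e e.symm).finrank_eq

lemma finrank_linearMap_pi_pi {ι κ : Type*} [Fintype ι] [Fintype κ] [DecidableEq ι]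
    (M : ι → Type*) (N : κ → Type*) [∀ i, AddCommGroup (M i)] [∀ i, Module k (M i)]
    [∀ i, Module A (M i)] [∀ i, IsScalarTower k A (M i)] [∀ j, AddCommGroup (N j)]
    [∀ j, Module k (N j)] [∀ j, Module A (N j)] [∀ j, IsScalarTower k A (N j)]
    [∀ i, FiniteDimensional k (M i)] [∀ j, FiniteDimensional k (N j)] :
    finrank k ((Π i, M i) →ₗ[A] Π j, N j) = ∑ i, ∑ j, finrank k (M i →ₗ[A] N j) := by
  rw [← (LinearMap.lsum A M k).finrank_eq, finrank_pi_fintype]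
  congr! with i
  rw [← (LinearEquiv.linearMapPi k).finrank_eq, finrank_pi_fintype]

theorem finrank_linearMap_comm [FiniteDimensional k M] [FiniteDimensional k N]
    [IsSemisimpleModule A M] [IsSemisimpleModule A N] :
    finrank k (M →ₗ[A] N) = finrank k (N →ₗ[A] M) := by
  have : Module.Finite A M := .of_restrictScalars_finite k A M
  have : Module.Finite A N := .of_restrictScalars_finite k A N
  obtain ⟨m, S, eM, hS⟩ := IsSemisimpleModule.exists_linearEquiv_fin_dfinsupp A M
  obtain ⟨n, T, eN, hT⟩ := IsSemisimpleModule.exists_linearEquiv_fin_dfinsupp A N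
  have : ∀ i, FiniteDimensional k (S i) := fun i ↦
    inferInstanceAs (FiniteDimensional k ((S i).restrictScalars k))
  have : ∀ j, FiniteDimensional k (T j) := fun j ↦
    inferInstanceAs (FiniteDimensional k ((T j).restrictScalars k))
  let eM' := eM.trans DFinsupp.linearEquivFunOnFintype
  let eN' := eN.trans DFinsupp.linearEquivFunOnFintype
  rw [(LinearEquiv.linearMapCongr k eM' eN').finrank_eq,
    (LinearEquiv.linearMapCongr k eN' eM').finrank_eq, finrank_linearMap_pi_pi,
    finrank_linearMap_pi_pi, Finset.sum_comm]
  exact Finset.sum_congr rfl fun _ _ ↦ Finset.sum_congr rfl fun _ _ ↦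
    finrank_linearMap_comm_of_isSimpleModule

end FinrankLinearMap

namespace Subrepresentation

variable {k V : Type*} [CommSemiring k] [AddCommMonoid V] [Module k V]
  {ρ : Representation k G V} {N : Subgroup G} [N.Normal]

def conjMap (g : G) (σ : Subrepresentation (ρ.comp N.subtype)) :
    Subrepresentation (ρ.comp N.subtype) where
  toSubmodule := σ.toSubmodule.map (ρ g)
  apply_mem_toSubmodule := by
    rintro n _ ⟨w, hw, rfl⟩
    have hn : g⁻¹ * n * g ∈ N := by simpa using Subgroup.Normal.conj_mem ‹_› (n : G) n.2 g⁻¹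
    refine ⟨ρ (g⁻¹ * n * g) w, σ.apply_mem_toSubmodule ⟨_, hn⟩ hw, ?_⟩
    simp [← Module.End.mul_apply, ← map_mul, mul_assoc]

lemma conjMap_mul (g h : G) (σ : Subrepresentation (ρ.comp N.subtype)) :
    conjMap g (conjMap h σ) = conjMap (g * h) σ := by
  ext v
  simp [conjMap]

lemma conjMap_one (σ : Subrepresentation (ρ.comp N.subtype)) : conjMap 1 σ = σ := by
  ext v
  simp [conjMap]

lemma conjMap_mono (g : G) : Monotone (conjMap (ρ := ρ) (N := N) g) :=
  fun _ _ h ↦ Submodule.map_mono (f := ρ g) h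

@[simps! apply]
def conj (g : G) :
    Subrepresentation (ρ.comp N.subtype) ≃o Subrepresentation (ρ.comp N.subtype) where
  toFun := conjMap g
  invFun := conjMap g⁻¹
  left_inv σ := by simp [conjMap_mul, conjMap_one]
  right_inv σ := by simp [conjMap_mul, conjMap_one]
  map_rel_iff' := ⟨fun h ↦ by simpa [conjMap_mul, conjMap_one] using conjMap_mono g⁻¹ h,
    fun h ↦ conjMap_mono g h⟩

end Subrepresentation

namespace Representation

variable {k V : Type*} [Field k] [AddCommGroup V] [Module k V] {ρ : Representation k G V}

theorem IsIrreducible.nontrivial [ρ.IsIrreducible] : Nontrivial V := by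
  by_contra h
  rw [not_nontrivial_iff_subsingleton] at h
  exact bot_ne_top (Subrepresentation.toSubmodule_injective (Subsingleton.elim _ _) :
    (⊥ : Subrepresentation ρ) = ⊤)

open Subrepresentation in
theorem isSemisimpleModule_asModule_comp_subtype [FiniteDimensional k V] [ρ.IsIrreducible]
    (N : Subgroup G) [N.Normal] :
    IsSemisimpleModule k[N] (Representation.asModule (ρ.comp N.subtype)) := by
  have : IsArtinian k[N] (Representation.asModule (ρ.comp N.subtype)) :=
    isArtinian_of_tower k (M := Representation.asModule (ρ.comp N.subtype)) inferInstance
  have : Nontrivial V := IsIrreducible.nontrivial (ρ := ρ)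
  have : Nontrivial (Representation.asModule (ρ.comp N.subtype)) := ‹Nontrivial V›
  obtain ⟨W, hW⟩ :=
    IsAtomic.exists_atom (Submodule k[N] (Representation.asModule (ρ.comp N.subtype)))
  let e := subrepresentationSubmoduleOrderIso (ρ := ρ.comp N.subtype)
  let P (g : G) := e (conj g (e.symm W))
  have hP (g : G) : IsSimpleModule k[N] (P g) := isSimpleModule_iff_isAtom.mpr <|
    (e.isAtom_iff _).mpr <| ((conj g).isAtom_iff _).mpr <| (e.symm.isAtom_iff _).mpr hW
  refine isSemisimpleModule_of_isSemisimpleModule_submodule' (p := P) (fun g ↦ inferInstance) ?_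
  set Q := ⨆ g, P g
  -- `asModule` is a type synonym for `V`; `φ` makes the identification explicit.
  let φ := Representation.asModuleEquiv (ρ.comp N.subtype)
  have hQ (g : G) (v) (hv : v ∈ Q) : φ.symm (ρ g (φ v)) ∈ Q := by
    refine Submodule.iSup_induction P (motive := fun v ↦ φ.symm (ρ g (φ v)) ∈ Q) hv
      (fun h v hv ↦ Submodule.mem_iSup_of_mem (g * h) ?_) (by simp)
      (fun v w hv hw ↦ by simpa using add_mem hv hw)
    simp only [P, e, subrepresentationSubmoduleOrderIso_apply, conj_apply, ← conjMap_mul] at hv ⊢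
    exact ⟨v, hv, rfl⟩
  have hWQ : W ≤ Q := le_iSup_of_le 1 (by simp [P, conjMap_one])
  rcases IsSimpleOrder.eq_bot_or_eq_top
      (⟨(ofSubmodule' Q).toSubmodule, hQ⟩ : Subrepresentation ρ) with h | h <;>
    have h' := congrArg toSubmodule h
  · have : e.symm Q = ⊥ := toSubmodule_injective h'
    exact (hW.1 (eq_bot_iff.mpr (hWQ.trans (map_eq_bot_iff e.symm |>.mp this).le))).elim
  · have : e.symm Q = ⊤ := toSubmodule_injective h'
    exact map_eq_top_iff e.symm |>.mp this

end Representation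

section Complex

variable {V V₁ V₂ : Type*} [AddCommGroup V] [Module ℂ V]
  [AddCommGroup V₁] [Module ℂ V₁] [AddCommGroup V₂] [Module ℂ V₂]

lemma IsIrrep.isIrreducible {ρ : Representation ℂ G V} (h : IsIrrep ρ) : ρ.IsIrreducible :=
  have := h.1
  { exists_pair_ne := ⟨⊥, ⊤, fun h' ↦ bot_ne_top (congrArg Subrepresentation.toSubmodule h')⟩
    eq_bot_or_eq_top σ := (h.2 σ.toSubmodule σ.apply_mem_toSubmodule).imp
      (fun h ↦ Subrepresentation.toSubmodule_injective h)
      (fun h ↦ Subrepresentation.toSubmodule_injective h) }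

def homSpaceEquivIntertwiningMap (N : Subgroup G) (ρ₁ : Representation ℂ G V₁)
    (ρ₂ : Representation ℂ G V₂) :
    homSpace N ρ₁ ρ₂ ≃ₗ[ℂ]
      Representation.IntertwiningMap (ρ₁.comp N.subtype) (ρ₂.comp N.subtype) where
  toFun f := ⟨f.1, fun n ↦ LinearMap.ext (f.2 n n.2)⟩
  invFun f := ⟨f.toLinearMap, fun h hh v ↦ f.isIntertwining _ _ ⟨h, hh⟩ v⟩
  map_add' _ _ := rfl
  map_smul' _ _ := rfl
  left_inv _ := rfl
  right_inv _ := rfl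

end Complex

/-- `dim Hom_N(π₁, π₂) = dim Hom_N(π₂, π₁)`. -/
theorem stmt4 {V₁ V₂ : Type*} [AddCommGroup V₁] [Module ℂ V₁] [FiniteDimensional ℂ V₁]
    [AddCommGroup V₂] [Module ℂ V₂] [FiniteDimensional ℂ V₂]
    (N : Subgroup G) [N.Normal]
    (ρ₁ : Representation ℂ G V₁) (ρ₂ : Representation ℂ G V₂)
    (h₁ : IsIrrep ρ₁) (h₂ : IsIrrep ρ₂) :
    Module.finrank ℂ (homSpace N ρ₁ ρ₂) = Module.finrank ℂ (homSpace N ρ₂ ρ₁) := by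
  have := h₁.isIrreducible
  have := h₂.isIrreducible
  have := Representation.isSemisimpleModule_asModule_comp_subtype (ρ := ρ₁) N
  have := Representation.isSemisimpleModule_asModule_comp_subtype (ρ := ρ₂) N
  rw [((homSpaceEquivIntertwiningMap N ρ₁ ρ₂).trans
      (Representation.IntertwiningMap.equivLinearMapAsModule _ _)).finrank_eq,
    ((homSpaceEquivIntertwiningMap N ρ₂ ρ₁).trans
      (Representation.IntertwiningMap.equivLinearMapAsModule _ _)).finrank_eq]
  exact finrank_linearMap_comm
end
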